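/- arXiv:1610.02611 — 4 statements merged into one kernel-verified Lean document; each statement's English description precedes it below -/
import Mathlib

section
/- Fix a natural number m. For each n > m, the expected number of zeros of the naive-model random harmonic polynomial, given by E N_n = (1/π) ∫_ℂ (1/|z|²) · (r₁² + r₂² − 2 r₁₂²) / (r₃² √((r₁ + r₂)² − 4 r₁₂²)) dσ(z), satisfies lim_{n→∞} E N_n / n = 1. -/
open Finset MeasureTheory Filter Real

/-- `aP k s = ∑_{j=0}^k s^j` -/
noncomputable def aP (k : ℕ) (s : ℝ) : ℝ := ∑ j ∈ range (k + 1), s ^ j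

/-- `bP k s = ∑_{j=1}^k j s^j` -/
noncomputable def bP (k : ℕ) (s : ℝ) : ℝ := ∑ j ∈ range (k + 1), (j : ℝ) * s ^ j

/-- `cP k s = ∑_{j=1}^k j² s^j` -/
noncomputable def cP (k : ℕ) (s : ℝ) : ℝ := ∑ j ∈ range (k + 1), (j : ℝ) ^ 2 * s ^ j

/-- The Li–Wei expected number of zeros of the naive-model random harmonic
polynomial of degrees `n`, `m`:
`E N = (1/π) ∫_ℂ (1/|z|²) (r₁² + r₂² − 2r₁₂²) / (r₃² √((r₁+r₂)² − 4r₁₂²)) dσ(z)`. -/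
noncomputable def expectedZeros (n m : ℕ) : ℝ :=
  (1 / π) * ∫ z : ℂ,
    let s : ℝ := ‖z‖ ^ 2
    let r₃ : ℝ := aP n s + aP m s
    let r₁ : ℝ := r₃ * cP n s - bP n s ^ 2
    let r₂ : ℝ := r₃ * cP m s - bP m s ^ 2
    let r₁₂ : ℝ := bP n s * bP m s
    (1 / s) * ((r₁ ^ 2 + r₂ ^ 2 - 2 * r₁₂ ^ 2) /
      (r₃ ^ 2 * Real.sqrt ((r₁ + r₂) ^ 2 - 4 * r₁₂ ^ 2)))

/-!
In the variable `s = |z|²` the measure `dσ / π` becomes `ds` on `(0, ∞)`. Since `s a_k' = b_k` and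
`s b_k' = c_k`, the quotient rule shows that `(r₁ + r₂ - 2 r₁₂) / (s r₃²)` is the derivative of the
mean degree `(b_n + b_m) / r₃`, which increases from `0` at `s = 0` to `n` as `s → ∞`; so this
part of the integrand integrates to exactly `n`. As `r₁, r₂, r₁₂ ≥ 0` and `r₁₂² ≤ r₁ r₂`, the true
integrand differs from it by at most `(2 r₁₂ + 4 r₂) / (s r₃²) ≤ c_m (2 b_n + 4 r₃) / (s r₃²)`.
With `b_n ≤ a_n²` for `s ≤ 1`, and `b_n ≤ n a_n`, `r₃ ≥ s^n` for `s ≥ 1`, this error is at most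
`6 (m+1)³` on `(0, 1]` and `(2n + 4) (m+1)³ s^(m-n-1)` on `[1, ∞)`, so it integrates to `O(m³)`
uniformly in `n > 2m`. Hence `E N_n = n + O(1)`.
-/

open Set Topology

section PowerSums

variable {k : ℕ} {s : ℝ}

@[fun_prop]
lemma continuous_aP : Continuous (aP k) := by unfold aP; fun_prop

@[fun_prop]
lemma continuous_bP : Continuous (bP k) := by unfold bP; fun_prop

@[fun_prop]
lemma continuous_cP : Continuous (cP k) := by unfold cP; fun_prop

lemma aP_nonneg (hs : 0 ≤ s) : 0 ≤ aP k s :=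
  sum_nonneg fun j _ => pow_nonneg hs j

lemma bP_nonneg (hs : 0 ≤ s) : 0 ≤ bP k s :=
  sum_nonneg fun j _ => by positivity

lemma cP_nonneg (hs : 0 ≤ s) : 0 ≤ cP k s :=
  sum_nonneg fun j _ => by positivity

lemma one_le_aP (hs : 0 ≤ s) : 1 ≤ aP k s := by
  simpa [aP] using
    single_le_sum (f := (s ^ ·)) (fun j _ => pow_nonneg hs j) (mem_range.2 k.succ_pos)

lemma pow_le_aP (hs : 0 ≤ s) : s ^ k ≤ aP k s :=
  single_le_sum (fun j _ => pow_nonneg hs j) (self_mem_range_succ k)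

lemma bP_zero : bP k 0 = 0 :=
  sum_eq_zero fun j _ => by rcases j with _ | j <;> simp

lemma bP_le_cP (hs : 0 ≤ s) : bP k s ≤ cP k s :=
  sum_le_sum fun j _ => by
    gcongr
    rcases j with _ | j
    · simp
    · exact_mod_cast Nat.le_self_pow two_ne_zero _

lemma bP_le_mul_aP {n : ℕ} (hkn : k ≤ n) (hs : 0 ≤ s) : bP k s ≤ n * aP k s := by
  rw [bP, aP, mul_sum]
  exact sum_le_sum fun j hj => by
    gcongr
    exact_mod_cast (Nat.lt_succ_iff.1 (mem_range.1 hj)).trans hkn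

lemma sq_bP_le_aP_mul_cP (hs : 0 ≤ s) : bP k s ^ 2 ≤ aP k s * cP k s :=
  sum_sq_le_sum_mul_sum_of_sq_le_mul _ (fun j _ => pow_nonneg hs j)
    (fun j _ => by positivity) fun j _ => le_of_eq (by ring)

lemma aP_succ (k : ℕ) (s : ℝ) : aP (k + 1) s = 1 + s * aP k s := by
  rw [aP, sum_range_succ', aP, mul_sum]
  simp only [pow_succ', pow_zero]
  ring

lemma bP_succ (k : ℕ) (s : ℝ) : bP (k + 1) s = s * (bP k s + aP k s) := by
  rw [bP, sum_range_succ', bP, aP, ← sum_add_distrib, mul_sum]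
  simp only [Nat.cast_add, Nat.cast_one, Nat.cast_zero, zero_mul, add_zero]
  exact sum_congr rfl fun j _ => by ring

lemma one_sub_mul_aP (k : ℕ) (s : ℝ) : (1 - s) * aP k s = 1 - s ^ (k + 1) := by
  rw [aP, ← neg_sub, neg_mul, mul_comm, geom_sum_mul]
  ring

-- Via `a_{k+1} = 1 + s a_k` and `b_{k+1} = s (b_k + a_k)`, the step reduces to `(1 - s) a_k ≤ 1`.
lemma bP_le_sq_aP (hs : 0 ≤ s) : bP k s ≤ aP k s ^ 2 := by
  induction k with
  | zero => simp [bP, aP]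
  | succ k ih =>
    have hgeom : (1 - s) * aP k s ≤ 1 := by
      rw [one_sub_mul_aP]
      linarith [pow_nonneg hs (k + 1)]
    have ha := aP_nonneg (k := k) hs
    rw [bP_succ, aP_succ]
    nlinarith [mul_le_mul_of_nonneg_left ih hs, mul_le_mul_of_nonneg_left hgeom (mul_nonneg hs ha)]

lemma cP_le_of_pow_le {c : ℝ} (hc : 0 ≤ c) (hpow : ∀ j, 1 ≤ j → j ≤ k → s ^ j ≤ c) :
    cP k s ≤ (k + 1) ^ 3 * c := by
  calc cP k s ≤ ∑ _j ∈ range (k + 1), (k : ℝ) ^ 2 * c := sum_le_sum fun j hj => by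
        have hjk := Nat.lt_succ_iff.1 (mem_range.1 hj)
        rcases j with _ | j
        · simpa using mul_nonneg (sq_nonneg (k : ℝ)) hc
        · exact mul_le_mul_of_nonneg (by gcongr) (hpow _ (by omega) hjk) (by positivity) hc
    _ = (k + 1) * k ^ 2 * c := by rw [sum_const, card_range, nsmul_eq_mul]; push_cast; ring
    _ ≤ (k + 1) ^ 3 * c := by gcongr; nlinarith

lemma cP_le_of_le_one (hs : 0 ≤ s) (hs1 : s ≤ 1) : cP k s ≤ (k + 1) ^ 3 * s :=
  cP_le_of_pow_le hs fun _ hj _ => pow_le_of_le_one hs hs1 (by omega)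

lemma cP_le_of_one_le (hs : 1 ≤ s) : cP k s ≤ (k + 1) ^ 3 * s ^ k :=
  cP_le_of_pow_le (by positivity) fun _ _ hjk => pow_le_pow_right₀ hs hjk

lemma mul_mul_aP_sub_bP_le {n : ℕ} (hkn : k ≤ n) (hs : 1 ≤ s) :
    s * (n * aP k s - bP k s) ≤ (n + 1) * n * s ^ n := by
  have hterm : ∀ j ∈ range (k + 1), ((n : ℝ) - j) * s ^ (j + 1) ≤ n * s ^ n := fun j hj => by
    have hjn := (Nat.lt_succ_iff.1 (mem_range.1 hj)).trans hkn
    rcases hjn.eq_or_lt with rfl | hlt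
    · simp only [sub_self, zero_mul]; positivity
    · have : s ^ (j + 1) ≤ s ^ n := pow_le_pow_right₀ hs hlt
      have : (0 : ℝ) ≤ j := j.cast_nonneg
      nlinarith [pow_nonneg (zero_le_one.trans hs) (j + 1)]
  calc s * (n * aP k s - bP k s) = ∑ j ∈ range (k + 1), ((n : ℝ) - j) * s ^ (j + 1) := by
        rw [aP, bP, mul_sum, ← sum_sub_distrib, mul_sum]
        exact sum_congr rfl fun j _ => by ring
    _ ≤ ∑ _j ∈ range (k + 1), (n : ℝ) * s ^ n := sum_le_sum hterm
    _ = (k + 1) * n * s ^ n := by rw [sum_const, card_range, nsmul_eq_mul]; push_cast; ring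
    _ ≤ (n + 1) * n * s ^ n := by gcongr

lemma hasDerivAt_sum_mul_pow (w : ℕ → ℝ) (hs : s ≠ 0) :
    HasDerivAt (fun x => ∑ j ∈ range (k + 1), w j * x ^ j)
      ((∑ j ∈ range (k + 1), j * w j * s ^ j) / s) s := by
  refine (HasDerivAt.fun_sum fun j _ => (hasDerivAt_pow j s).const_mul (w j)).congr_deriv ?_
  rw [sum_div]
  refine sum_congr rfl fun j _ => ?_
  rcases j with _ | j
  · simp
  · rw [Nat.add_sub_cancel, eq_div_iff hs]
    ring

lemma hasDerivAt_aP (hs : s ≠ 0) : HasDerivAt (aP k) (bP k s / s) s := by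
  have h := hasDerivAt_sum_mul_pow (k := k) (fun _ => 1) hs
  simp only [one_mul, mul_one] at h
  exact h

lemma hasDerivAt_bP (hs : s ≠ 0) : HasDerivAt (bP k) (cP k s / s) s := by
  have h := hasDerivAt_sum_mul_pow (k := k) (fun j => j) hs
  simp only [← sq] at h
  exact h

end PowerSums

section Sandwich

variable {a b c : ℝ}

lemma abs_div_sqrt_sub_le (ha : 0 ≤ a) (hb : 0 ≤ b) (hc : 0 ≤ c) (hcab : c ^ 2 ≤ a * b) :
    |(a ^ 2 + b ^ 2 - 2 * c ^ 2) / √((a + b) ^ 2 - 4 * c ^ 2) - (a + b - 2 * c)| ≤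
      2 * c + 4 * b := by
  have hc2 := two_mul_le_add_of_sq_le_mul ha hb hcab
  have hN : 0 ≤ a ^ 2 + b ^ 2 - 2 * c ^ 2 := by nlinarith [sq_nonneg (a - b)]
  obtain ⟨D, hD⟩ : ∃ D, √((a + b) ^ 2 - 4 * c ^ 2) = D := ⟨_, rfl⟩
  rw [hD]
  have hD2 : D ^ 2 = (a + b) ^ 2 - 4 * c ^ 2 := hD ▸ Real.sq_sqrt (by nlinarith)
  have hDle : D ≤ a + b := hD ▸ Real.sqrt_le_iff.2 ⟨by linarith, by nlinarith⟩
  rcases (hD ▸ Real.sqrt_nonneg _ : 0 ≤ D).eq_or_lt with hD0 | hDpos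
  · have : (a + b) ^ 2 - 4 * c ^ 2 ≤ 0 := Real.sqrt_eq_zero'.1 (hD.trans hD0.symm)
    rw [← hD0, div_zero, abs_le]
    constructor <;> nlinarith
  · rw [abs_le, le_sub_iff_add_le, sub_le_iff_le_add, le_div_iff₀ hDpos, div_le_iff₀ hDpos]
    constructor
    · rcases le_total (a - 3 * b - 2 * c) 0 with h | h
      · nlinarith
      · nlinarith [mul_le_mul_of_nonneg_left hDle h]
    · nlinarith

end Sandwich

section Coefficients

variable (n m : ℕ)

noncomputable def r₃ (s : ℝ) : ℝ := aP n s + aP m s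

noncomputable def r₁ (s : ℝ) : ℝ := r₃ n m s * cP n s - bP n s ^ 2

noncomputable def r₂ (s : ℝ) : ℝ := r₃ n m s * cP m s - bP m s ^ 2

noncomputable def r₁₂ (s : ℝ) : ℝ := bP n s * bP m s

variable {n m} {s : ℝ}

lemma aP_le_r₃ (hs : 0 ≤ s) : aP n s ≤ r₃ n m s :=
  le_add_of_nonneg_right (aP_nonneg hs)

lemma one_le_r₃ (hs : 0 ≤ s) : 1 ≤ r₃ n m s :=
  (one_le_aP hs).trans (aP_le_r₃ hs)

lemma r₃_pos (hs : 0 ≤ s) : 0 < r₃ n m s :=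
  zero_lt_one.trans_le (one_le_r₃ hs)

lemma aP_mul_cP_le_r₁ (hs : 0 ≤ s) : aP m s * cP n s ≤ r₁ n m s := by
  rw [r₁, r₃]
  linarith [sq_bP_le_aP_mul_cP (k := n) hs]

lemma aP_mul_cP_le_r₂ (hs : 0 ≤ s) : aP n s * cP m s ≤ r₂ n m s := by
  rw [r₂, r₃]
  linarith [sq_bP_le_aP_mul_cP (k := m) hs]

lemma r₁_nonneg (hs : 0 ≤ s) : 0 ≤ r₁ n m s :=
  (mul_nonneg (aP_nonneg hs) (cP_nonneg hs)).trans (aP_mul_cP_le_r₁ hs)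

lemma r₂_nonneg (hs : 0 ≤ s) : 0 ≤ r₂ n m s :=
  (mul_nonneg (aP_nonneg hs) (cP_nonneg hs)).trans (aP_mul_cP_le_r₂ hs)

lemma r₁₂_nonneg (hs : 0 ≤ s) : 0 ≤ r₁₂ n m s :=
  mul_nonneg (bP_nonneg hs) (bP_nonneg hs)

lemma sq_r₁₂_le_r₁_mul_r₂ (hs : 0 ≤ s) : r₁₂ n m s ^ 2 ≤ r₁ n m s * r₂ n m s :=
  calc r₁₂ n m s ^ 2 = bP n s ^ 2 * bP m s ^ 2 := by rw [r₁₂, mul_pow]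
    _ ≤ (aP n s * cP n s) * (aP m s * cP m s) :=
      mul_le_mul (sq_bP_le_aP_mul_cP hs) (sq_bP_le_aP_mul_cP hs) (sq_nonneg _)
        (mul_nonneg (aP_nonneg hs) (cP_nonneg hs))
    _ = (aP m s * cP n s) * (aP n s * cP m s) := by ring
    _ ≤ r₁ n m s * r₂ n m s :=
      mul_le_mul (aP_mul_cP_le_r₁ hs) (aP_mul_cP_le_r₂ hs)
        (mul_nonneg (aP_nonneg hs) (cP_nonneg hs)) (r₁_nonneg hs)

lemma two_mul_r₁₂_le_r₁_add_r₂ (hs : 0 ≤ s) : 2 * r₁₂ n m s ≤ r₁ n m s + r₂ n m s :=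
  two_mul_le_add_of_sq_le_mul (r₁_nonneg hs) (r₂_nonneg hs) (sq_r₁₂_le_r₁_mul_r₂ hs)

lemma two_mul_r₁₂_add_four_mul_r₂_le (hs : 0 ≤ s) :
    2 * r₁₂ n m s + 4 * r₂ n m s ≤ cP m s * (2 * bP n s + 4 * r₃ n m s) := by
  have hr₁₂ : r₁₂ n m s ≤ bP n s * cP m s :=
    mul_le_mul_of_nonneg_left (bP_le_cP hs) (bP_nonneg hs)
  have hr₂ : r₂ n m s ≤ r₃ n m s * cP m s := by
    rw [r₂]; linarith [sq_nonneg (bP m s)]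
  linarith

end Coefficients

section MeanDegree

variable (n m : ℕ)

noncomputable def meanDegree (s : ℝ) : ℝ := (bP n s + bP m s) / r₃ n m s

noncomputable def meanDegreeDeriv (s : ℝ) : ℝ :=
  (r₁ n m s + r₂ n m s - 2 * r₁₂ n m s) / (s * r₃ n m s ^ 2)

variable {n m} {s : ℝ}

lemma hasDerivAt_meanDegree (hs : 0 < s) :
    HasDerivAt (meanDegree n m) (meanDegreeDeriv n m s) s := by
  have hr₃ := (r₃_pos (n := n) (m := m) hs.le).ne'
  refine (((hasDerivAt_bP hs.ne').add (hasDerivAt_bP hs.ne')).div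
    ((hasDerivAt_aP hs.ne').add (hasDerivAt_aP hs.ne')) hr₃).congr_deriv ?_
  rw [r₃] at hr₃
  rw [meanDegreeDeriv, r₁, r₂, r₁₂, r₃]
  simp only [Pi.add_apply]
  field_simp
  ring

lemma meanDegreeDeriv_nonneg (hs : 0 ≤ s) : 0 ≤ meanDegreeDeriv n m s :=
  div_nonneg (by linarith [two_mul_r₁₂_le_r₁_add_r₂ (n := n) (m := m) hs]) (by positivity)

lemma meanDegree_zero : meanDegree n m 0 = 0 := by
  simp [meanDegree, bP_zero]

lemma continuousAt_meanDegree_zero : ContinuousAt (meanDegree n m) 0 := by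
  unfold meanDegree r₃
  exact ContinuousAt.div (by fun_prop) (by fun_prop) (r₃_pos le_rfl).ne'

lemma meanDegree_le (hmn : m ≤ n) (hs : 0 ≤ s) : meanDegree n m s ≤ n := by
  rw [meanDegree, div_le_iff₀ (r₃_pos hs), r₃]
  linarith [bP_le_mul_aP le_rfl hs (k := n), bP_le_mul_aP hmn hs]

lemma sub_le_meanDegree (hmn : m ≤ n) (hs : 1 ≤ s) :
    n - 2 * (n + 1) * n / s ≤ meanDegree n m s := by
  have hs0 : 0 < s := zero_lt_one.trans_le hs
  have hr₃ := r₃_pos (n := n) (m := m) hs0.le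
  have hgap : s * (n * r₃ n m s - (bP n s + bP m s)) ≤ 2 * (n + 1) * n * r₃ n m s := by
    have hn := mul_mul_aP_sub_bP_le (k := n) le_rfl hs
    have hm := mul_mul_aP_sub_bP_le hmn hs
    have hpow : (n + 1) * n * s ^ n ≤ (n + 1) * n * r₃ n m s :=
      mul_le_mul_of_nonneg_left ((pow_le_aP hs0.le).trans (aP_le_r₃ hs0.le)) (by positivity)
    rw [r₃] at hpow ⊢
    nlinarith
  have hquot : (n : ℝ) - meanDegree n m s = (n * r₃ n m s - (bP n s + bP m s)) / r₃ n m s := by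
    rw [meanDegree]; field_simp
  have : (n : ℝ) - meanDegree n m s ≤ 2 * (n + 1) * n / s := by
    rw [hquot, div_le_div_iff₀ hr₃ hs0]
    linarith
  linarith

lemma tendsto_meanDegree (hmn : m ≤ n) : Tendsto (meanDegree n m) atTop (𝓝 n) := by
  have hlower : Tendsto (fun s : ℝ => n - 2 * (n + 1) * n / s) atTop (𝓝 n) := by
    simpa using tendsto_const_nhds.sub
      ((tendsto_const_nhds (x := (2 * (n + 1) * n : ℝ))).div_atTop tendsto_id)
  refine tendsto_of_tendsto_of_tendsto_of_le_of_le' hlower tendsto_const_nhds ?_ ?_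
  · filter_upwards [eventually_ge_atTop 1] with s hs using sub_le_meanDegree hmn hs
  · filter_upwards [eventually_ge_atTop 0] with s hs using meanDegree_le hmn hs

lemma integrableOn_meanDegreeDeriv (hmn : m ≤ n) : IntegrableOn (meanDegreeDeriv n m) (Ioi 0) :=
  integrableOn_Ioi_deriv_of_nonneg continuousAt_meanDegree_zero.continuousWithinAt
    (fun _ hs => hasDerivAt_meanDegree hs) (fun _ hs => meanDegreeDeriv_nonneg (le_of_lt hs))
    (tendsto_meanDegree hmn)

lemma integral_meanDegreeDeriv (hmn : m ≤ n) : ∫ s in Ioi 0, meanDegreeDeriv n m s = n := by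
  rw [integral_Ioi_of_hasDerivAt_of_nonneg continuousAt_meanDegree_zero.continuousWithinAt
    (fun _ hs => hasDerivAt_meanDegree hs) (fun _ hs => meanDegreeDeriv_nonneg (le_of_lt hs))
    (tendsto_meanDegree hmn), meanDegree_zero, sub_zero]

end MeanDegree

theorem integral_comp_norm_sq_complex {E : Type*} [NormedAddCommGroup E] [NormedSpace ℝ E]
    (f : ℝ → E) : ∫ z : ℂ, f (‖z‖ ^ 2) = π • ∫ s in Ioi 0, f s := by
  have hsubst := integral_comp_rpow_Ioi_of_pos (g := f) (p := 2) two_pos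
  norm_num at hsubst
  rw [integral_fun_norm_addHaar volume (fun y => f (y ^ 2)), Complex.finrank_real_complex,
    measureReal_def, Complex.volume_ball, ← hsubst]
  simp_rw [mul_smul, integral_smul]
  norm_num
  module

section ZeroDensity

variable (n m : ℕ)

noncomputable def zeroDensity (s : ℝ) : ℝ :=
  (1 / s) * ((r₁ n m s ^ 2 + r₂ n m s ^ 2 - 2 * r₁₂ n m s ^ 2) /
    (r₃ n m s ^ 2 * √((r₁ n m s + r₂ n m s) ^ 2 - 4 * r₁₂ n m s ^ 2)))

lemma expectedZeros_eq_integral_zeroDensity :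
    expectedZeros n m = ∫ s in Ioi 0, zeroDensity n m s := by
  change (1 / π) * ∫ z : ℂ, zeroDensity n m (‖z‖ ^ 2) = _
  rw [integral_comp_norm_sq_complex, smul_eq_mul, ← mul_assoc, one_div_mul_cancel pi_ne_zero,
    one_mul]

lemma measurable_zeroDensity_sub_meanDegreeDeriv :
    Measurable fun s => zeroDensity n m s - meanDegreeDeriv n m s := by
  unfold zeroDensity meanDegreeDeriv r₁ r₂ r₁₂ r₃
  fun_prop

variable {n m} {s : ℝ}

lemma abs_zeroDensity_sub_meanDegreeDeriv_le (hs : 0 < s) :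
    |zeroDensity n m s - meanDegreeDeriv n m s| ≤
      (2 * r₁₂ n m s + 4 * r₂ n m s) / (s * r₃ n m s ^ 2) := by
  have hden : 0 < s * r₃ n m s ^ 2 := by have := r₃_pos (n := n) (m := m) hs.le; positivity
  have hsandwich := abs_div_sqrt_sub_le (r₁_nonneg hs.le) (r₂_nonneg hs.le) (r₁₂_nonneg hs.le)
    (sq_r₁₂_le_r₁_mul_r₂ (n := n) (m := m) hs.le)
  have hsplit : ∀ N D : ℝ, 1 / s * (N / (r₃ n m s ^ 2 * D)) = N / D / (s * r₃ n m s ^ 2) :=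
    fun _ _ => by ring
  rw [zeroDensity, hsplit, meanDegreeDeriv, ← sub_div, abs_div, abs_of_pos hden]
  exact div_le_div_of_nonneg_right hsandwich hden.le

lemma abs_zeroDensity_sub_meanDegreeDeriv_le_of_le_one (hs : 0 < s) (hs1 : s ≤ 1) :
    |zeroDensity n m s - meanDegreeDeriv n m s| ≤ 6 * (m + 1) ^ 3 := by
  have hr₃ := one_le_r₃ (n := n) (m := m) hs.le
  have hbn : bP n s ≤ r₃ n m s ^ 2 :=
    (bP_le_sq_aP hs.le).trans (pow_le_pow_left₀ (aP_nonneg hs.le) (aP_le_r₃ hs.le) 2)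
  have hnum : 2 * r₁₂ n m s + 4 * r₂ n m s ≤ 6 * (m + 1) ^ 3 * (s * r₃ n m s ^ 2) :=
    calc 2 * r₁₂ n m s + 4 * r₂ n m s ≤ cP m s * (2 * bP n s + 4 * r₃ n m s) :=
          two_mul_r₁₂_add_four_mul_r₂_le hs.le
      _ ≤ ((m + 1) ^ 3 * s) * (6 * r₃ n m s ^ 2) :=
          mul_le_mul (cP_le_of_le_one hs.le hs1) (by nlinarith)
            (by linarith [bP_nonneg (k := n) hs.le]) (by positivity)
      _ = 6 * (m + 1) ^ 3 * (s * r₃ n m s ^ 2) := by ring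
  exact (abs_zeroDensity_sub_meanDegreeDeriv_le hs).trans ((div_le_iff₀ (by positivity)).2 hnum)

lemma abs_zeroDensity_sub_meanDegreeDeriv_le_of_one_le (hs : 1 ≤ s) :
    |zeroDensity n m s - meanDegreeDeriv n m s| ≤
      (2 * n + 4) * (m + 1) ^ 3 * s ^ ((m : ℝ) - n - 1) := by
  have hs0 : 0 < s := zero_lt_one.trans_le hs
  have hr₃ := r₃_pos (n := n) (m := m) hs0.le
  have hrpow : s ^ ((m : ℝ) - n - 1) * (s * s ^ n) = s ^ m := by
    rw [Real.rpow_sub hs0, Real.rpow_sub hs0, Real.rpow_natCast, Real.rpow_natCast, Real.rpow_one]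
    field_simp
  have hnum : 2 * r₁₂ n m s + 4 * r₂ n m s ≤
      (2 * n + 4) * (m + 1) ^ 3 * s ^ ((m : ℝ) - n - 1) * (s * r₃ n m s ^ 2) :=
    calc 2 * r₁₂ n m s + 4 * r₂ n m s ≤ cP m s * (2 * bP n s + 4 * r₃ n m s) :=
          two_mul_r₁₂_add_four_mul_r₂_le hs0.le
      _ ≤ ((m + 1) ^ 3 * s ^ m) * ((2 * n + 4) * r₃ n m s) := by
          refine mul_le_mul (cP_le_of_one_le hs) ?_ (by linarith [bP_nonneg (k := n) hs0.le])
            (by positivity)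
          nlinarith [bP_le_mul_aP (k := n) le_rfl hs0.le, aP_le_r₃ (n := n) (m := m) hs0.le]
      _ = (2 * n + 4) * (m + 1) ^ 3 * s ^ ((m : ℝ) - n - 1) * (s * s ^ n) * r₃ n m s := by
          rw [← hrpow]; ring
      _ ≤ (2 * n + 4) * (m + 1) ^ 3 * s ^ ((m : ℝ) - n - 1) * (s * r₃ n m s) * r₃ n m s := by
          gcongr
          exact (pow_le_aP hs0.le).trans (aP_le_r₃ hs0.le)
      _ = (2 * n + 4) * (m + 1) ^ 3 * s ^ ((m : ℝ) - n - 1) * (s * r₃ n m s ^ 2) := by ring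
  exact (abs_zeroDensity_sub_meanDegreeDeriv_le hs0).trans ((div_le_iff₀ (by positivity)).2 hnum)

end ZeroDensity

section Asymptotics

variable {n m : ℕ}

lemma integrableOn_zeroDensity_sub_meanDegreeDeriv_Ioc :
    IntegrableOn (fun s => zeroDensity n m s - meanDegreeDeriv n m s) (Ioc 0 1) :=
  Measure.integrableOn_of_bounded (by simp)
    (measurable_zeroDensity_sub_meanDegreeDeriv n m).aestronglyMeasurable
    ((ae_restrict_iff' measurableSet_Ioc).2 (.of_forall fun _ hs =>
      abs_zeroDensity_sub_meanDegreeDeriv_le_of_le_one hs.1 hs.2))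

lemma norm_integral_zeroDensity_sub_meanDegreeDeriv_Ioc_le :
    ‖∫ s in Ioc (0 : ℝ) 1, (zeroDensity n m s - meanDegreeDeriv n m s)‖ ≤ 6 * (m + 1) ^ 3 := by
  simpa using norm_setIntegral_le_of_norm_le_const (μ := volume) measure_Ioc_lt_top fun _ hs =>
    (Real.norm_eq_abs _).trans_le
      (abs_zeroDensity_sub_meanDegreeDeriv_le_of_le_one (n := n) (m := m) hs.1 hs.2)

lemma integrableOn_zeroDensity_sub_meanDegreeDeriv_Ioi (hmn : m < n) :
    IntegrableOn (fun s => zeroDensity n m s - meanDegreeDeriv n m s) (Ioi 1) :=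
  Integrable.mono' ((integrableOn_Ioi_rpow_of_lt
      (by linarith [(Nat.cast_lt (α := ℝ)).2 hmn]) one_pos).const_mul _)
    (measurable_zeroDensity_sub_meanDegreeDeriv n m).aestronglyMeasurable
    ((ae_restrict_iff' measurableSet_Ioi).2 (.of_forall fun _ hs =>
      abs_zeroDensity_sub_meanDegreeDeriv_le_of_one_le (le_of_lt hs)))

lemma norm_integral_zeroDensity_sub_meanDegreeDeriv_Ioi_le (hmn : m < n) :
    ‖∫ s in Ioi (1 : ℝ), (zeroDensity n m s - meanDegreeDeriv n m s)‖ ≤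
      (2 * n + 4) * (m + 1) ^ 3 / (n - m) := by
  have hp : (m : ℝ) - n - 1 < -1 := by linarith [(Nat.cast_lt (α := ℝ)).2 hmn]
  calc ‖∫ s in Ioi (1 : ℝ), (zeroDensity n m s - meanDegreeDeriv n m s)‖
      ≤ ∫ s in Ioi (1 : ℝ), (2 * n + 4) * (m + 1) ^ 3 * s ^ ((m : ℝ) - n - 1) :=
        norm_integral_le_of_norm_le ((integrableOn_Ioi_rpow_of_lt hp one_pos).const_mul _)
          ((ae_restrict_iff' measurableSet_Ioi).2 (.of_forall fun _ hs =>
            abs_zeroDensity_sub_meanDegreeDeriv_le_of_one_le (le_of_lt hs)))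
    _ = (2 * n + 4) * (m + 1) ^ 3 / (n - m) := by
        have : (n : ℝ) - m ≠ 0 := by linarith
        rw [integral_const_mul, integral_Ioi_rpow_of_lt hp one_pos, Real.one_rpow,
          show (m : ℝ) - n - 1 + 1 = -(n - m) by ring]
        field_simp

lemma abs_expectedZeros_sub_le (hmn : 2 * m < n) :
    |expectedZeros n m - n| ≤ 14 * (m + 1) ^ 3 := by
  have hmn' : m < n := by omega
  have hIoi : Ioi (0 : ℝ) = Set.Ioc 0 1 ∪ Ioi 1 := (Ioc_union_Ioi_eq_Ioi zero_le_one).symm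
  have hIoc := integrableOn_zeroDensity_sub_meanDegreeDeriv_Ioc (n := n) (m := m)
  have hIoi1 := integrableOn_zeroDensity_sub_meanDegreeDeriv_Ioi hmn'
  have hzd : IntegrableOn (zeroDensity n m) (Ioi 0) :=
    ((hIoi ▸ hIoc.union hIoi1 : IntegrableOn _ (Ioi (0 : ℝ))).add
      (integrableOn_meanDegreeDeriv hmn'.le)).congr_fun (fun _ _ => sub_add_cancel _ _)
      measurableSet_Ioi
  have hsplit : expectedZeros n m - n =
      (∫ s in Ioc (0 : ℝ) 1, (zeroDensity n m s - meanDegreeDeriv n m s)) +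
        ∫ s in Ioi (1 : ℝ), (zeroDensity n m s - meanDegreeDeriv n m s) := by
    rw [← setIntegral_union (Ioc_disjoint_Ioi le_rfl) measurableSet_Ioi hIoc hIoi1, ← hIoi,
      integral_sub hzd (integrableOn_meanDegreeDeriv hmn'.le), integral_meanDegreeDeriv hmn'.le,
      expectedZeros_eq_integral_zeroDensity]
  have hfrac : (2 * n + 4) * (m + 1) ^ 3 / (n - m) ≤ 8 * ((m : ℝ) + 1) ^ 3 := by
    have : (2 * m + 1 : ℝ) ≤ n := by exact_mod_cast hmn
    rw [div_le_iff₀ (by linarith)]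
    nlinarith [pow_pos (by positivity : (0 : ℝ) < m + 1) 3]
  rw [hsplit]
  refine (abs_add_le _ _).trans ?_
  have h1 := norm_integral_zeroDensity_sub_meanDegreeDeriv_Ioc_le (n := n) (m := m)
  have h2 := norm_integral_zeroDensity_sub_meanDegreeDeriv_Ioi_le hmn'
  rw [Real.norm_eq_abs] at h1 h2
  linarith

end Asymptotics

lemma tendsto_div_natCast_of_abs_sub_le {f : ℕ → ℝ} {C : ℝ}
    (h : ∀ᶠ n in atTop, |f n - n| ≤ C) : Tendsto (fun n => f n / n) atTop (𝓝 1) := by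
  rw [tendsto_iff_norm_sub_tendsto_zero]
  refine squeeze_zero' (.of_forall fun _ => norm_nonneg _) ?_
    (tendsto_const_div_atTop_nhds_zero_nat C)
  filter_upwards [h, eventually_gt_atTop 0] with n hn hn0
  rw [Real.norm_eq_abs, div_sub_one (by positivity), abs_div, Nat.abs_cast]
  exact div_le_div_of_nonneg_right hn (by positivity)

/-- For fixed `m`, the expected number of zeros is asymptotically `n`. -/
theorem expectedZeros_asymptotic_fixed_m (m : ℕ) :
    Tendsto (fun n : ℕ => expectedZeros n m / n) atTop (nhds 1) :=
  tendsto_div_natCast_of_abs_sub_le <| (eventually_gt_atTop (2 * m)).mono fun _ hn =>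
    abs_expectedZeros_sub_le hn
end

section
/- Let x be a positive real number and for a natural number k set α_k = Σ_{j=0}^k x^j, β_k = Σ_{j=1}^k j x^j, γ_k = Σ_{j=1}^k j² x^j. Then for all natural numbers n, m ≥ 1, (α_n + α_m) γ_n γ_m ≥ γ_n β_m² + γ_m β_n². -/
/-!
Weighting by `x ^ j`, Cauchy–Schwarz gives `β_k ^ 2 ≤ α_k * γ_k` for every `k`, since
`(j * x ^ j) ^ 2 = x ^ j * (j ^ 2 * x ^ j)`. Multiplying these two bounds for `k = m` and `k = n` by
`γ_n ≥ 0` and `γ_m ≥ 0` respectively and adding them gives the inequality.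
-/

open Finset

theorem Finset.sq_sum_mul_le_sum_mul_sum_sq_mul {ι R : Type*} [CommSemiring R] [LinearOrder R]
    [IsStrictOrderedRing R] [ExistsAddOfLE R] (s : Finset ι) (a : ι → R) {w : ι → R}
    (hw : ∀ i ∈ s, 0 ≤ w i) :
    (∑ i ∈ s, a i * w i) ^ 2 ≤ (∑ i ∈ s, w i) * ∑ i ∈ s, a i ^ 2 * w i :=
  sum_sq_le_sum_mul_sum_of_sq_le_mul s hw
    (fun i hi => mul_nonneg (sq_nonneg _) (hw i hi)) (fun i _ => le_of_eq (by ring))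

theorem mul_sq_add_mul_sq_le_of_sq_le_mul {R : Type*} [CommSemiring R] [PartialOrder R]
    [IsOrderedRing R] {a₁ a₂ b₁ b₂ c₁ c₂ : R}
    (h₁ : b₁ ^ 2 ≤ a₁ * c₁) (h₂ : b₂ ^ 2 ≤ a₂ * c₂) (hc₁ : 0 ≤ c₁) (hc₂ : 0 ≤ c₂) :
    c₁ * b₂ ^ 2 + c₂ * b₁ ^ 2 ≤ (a₁ + a₂) * c₁ * c₂ :=
  calc c₁ * b₂ ^ 2 + c₂ * b₁ ^ 2
      ≤ c₁ * (a₂ * c₂) + c₂ * (a₁ * c₁) := by gcongr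
    _ = (a₁ + a₂) * c₁ * c₂ := by ring

theorem power_sum_ineq_general (x : ℝ) (hx : 0 < x) (n m : ℕ)
    (α β γ : ℕ → ℝ)
    (hα : ∀ k, α k = ∑ j ∈ range (k + 1), x ^ j)
    (hβ : ∀ k, β k = ∑ j ∈ range (k + 1), (j : ℝ) * x ^ j)
    (hγ : ∀ k, γ k = ∑ j ∈ range (k + 1), (j : ℝ) ^ 2 * x ^ j) :
    γ n * (β m) ^ 2 + γ m * (β n) ^ 2 ≤ (α n + α m) * γ n * γ m := by
  have hpow : ∀ k, ∀ j ∈ range (k + 1), 0 ≤ x ^ j := fun _ j _ => pow_nonneg hx.le j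
  have hβ_sq : ∀ k, β k ^ 2 ≤ α k * γ k := fun k => by
    simpa only [hα, hβ, hγ] using sq_sum_mul_le_sum_mul_sum_sq_mul _ (fun j : ℕ => (j : ℝ)) (hpow k)
  have hγ_nonneg : ∀ k, 0 ≤ γ k := fun k => by
    rw [hγ]
    exact sum_nonneg fun j hj => mul_nonneg (sq_nonneg _) (hpow k j hj)
  exact mul_sq_add_mul_sq_le_of_sq_le_mul (hβ_sq n) (hβ_sq m) (hγ_nonneg n) (hγ_nonneg m)

theorem power_sum_ineq (x : ℝ) (hx : 0 < x) (n m : ℕ) (hn : 1 ≤ n) (hm : 1 ≤ m)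
    (α β γ : ℕ → ℝ)
    (hα : ∀ k, α k = ∑ j ∈ range (k + 1), x ^ j)
    (hβ : ∀ k, β k = ∑ j ∈ range (k + 1), (j : ℝ) * x ^ j)
    (hγ : ∀ k, γ k = ∑ j ∈ range (k + 1), (j : ℝ) ^ 2 * x ^ j) :
    γ n * (β m) ^ 2 + γ m * (β n) ^ 2 ≤ (α n + α m) * γ n * γ m :=
  power_sum_ineq_general x hx n m α β γ hα hβ hγ
end

section
/- For every fixed real number t ≠ 0, lim_{n→∞} (1/(n²(n+t))) · Σ_{j=1}^n j² (1 + t/n)^j = ((t² − 2t + 2) e^t − 2)/t³. -/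
open Finset Filter Real Topology

/-! Summing `∑ j² xʲ` in closed form at `x = 1 + t/n` expresses the normalized sum as a rational
function of `t/n` and `(1 + t/n)^(n+1)`; letting `t/n → 0` and `(1 + t/n)^(n+1) → eᵗ` gives the
limit. -/

theorem sum_range_sq_mul_pow {K : Type*} [Field K] {x : K} (hx : x ≠ 1) (n : ℕ) :
    ∑ j ∈ range (n + 1), (j : K) ^ 2 * x ^ j =
      (x ^ (n + 1) * (((n : K) + 1) ^ 2 - (2 * (n : K) ^ 2 + 2 * n - 1) * x + (n : K) ^ 2 * x ^ 2)
        - x * (1 + x)) / (x - 1) ^ 3 := by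
  have hx' : x - 1 ≠ 0 := sub_ne_zero.mpr hx
  induction n with
  | zero => simp
  | succ n ih =>
    rw [sum_range_succ, ih]
    push_cast
    field_simp
    ring

theorem tendsto_one_add_div_pow_succ_exp (t : ℝ) :
    Tendsto (fun n : ℕ => (1 + t / n) ^ (n + 1)) atTop (𝓝 (exp t)) := by
  have h := (tendsto_one_add_div_pow_exp t).mul
    ((tendsto_const_div_atTop_nhds_zero_nat t).const_add 1)
  simpa only [pow_succ, add_zero, mul_one] using h

theorem normalized_sum_sq_mul_pow_eq {t : ℝ} (ht : t ≠ 0) {n : ℕ} (hn : (n : ℝ) ≠ 0)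
    (hnt : (n : ℝ) + t ≠ 0) :
    1 / ((n : ℝ) ^ 2 * (n + t)) * ∑ j ∈ range (n + 1), (j : ℝ) ^ 2 * (1 + t / n) ^ j =
      ((1 + t / n) ^ (n + 1) * (t ^ 2 - 2 * t + 2 + t / n) - (1 + t / n) * (2 + t / n))
        / ((1 + t / n) * t ^ 3) := by
  have hx : 1 + t / (n : ℝ) ≠ 1 := by simpa using div_ne_zero ht hn
  have hx0 : 1 + t / (n : ℝ) ≠ 0 := by
    rw [one_add_div hn]
    exact div_ne_zero hnt hn
  rw [sum_range_sq_mul_pow hx, add_sub_cancel_left]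
  field_simp
  ring

/-- For fixed `t ≠ 0`,
`lim_{n→∞} (1/(n²(n+t))) ∑_{j=1}^n j² (1 + t/n)^j = ((t² − 2t + 2)eᵗ − 2)/t³`. -/
theorem limit_c (t : ℝ) (ht : t ≠ 0) :
    Tendsto (fun n : ℕ =>
        (1 / ((n : ℝ) ^ 2 * ((n : ℝ) + t))) *
          ∑ j ∈ range (n + 1), (j : ℝ) ^ 2 * (1 + t / n) ^ j)
      atTop (nhds (((t ^ 2 - 2 * t + 2) * Real.exp t - 2) / t ^ 3)) := by
  have hh : Tendsto (fun n : ℕ => t / (n : ℝ)) atTop (𝓝 0) :=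
    tendsto_const_div_atTop_nhds_zero_nat t
  have hnum := ((tendsto_one_add_div_pow_succ_exp t).mul (hh.const_add (t ^ 2 - 2 * t + 2))).sub
    ((hh.const_add 1).mul (hh.const_add 2))
  have hden := (hh.const_add 1).mul (tendsto_const_nhds (x := t ^ 3))
  have hlim := hnum.div hden (by simp [ht])
  rw [show ((t ^ 2 - 2 * t + 2) * exp t - 2) / t ^ 3 =
      (exp t * (t ^ 2 - 2 * t + 2 + 0) - (1 + 0) * (2 + 0)) / ((1 + 0) * t ^ 3) by ring]
  refine hlim.congr' ?_
  have hn : ∀ᶠ n : ℕ in atTop, (n : ℝ) ≠ 0 :=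
    (tendsto_natCast_atTop_atTop.eventually_gt_atTop 0).mono fun _ h => h.ne'
  have hnt : ∀ᶠ n : ℕ in atTop, (n : ℝ) + t ≠ 0 :=
    ((tendsto_natCast_atTop_atTop.atTop_add tendsto_const_nhds).eventually_gt_atTop 0).mono
      fun _ h => h.ne'
  filter_upwards [hn, hnt] with n hn hnt
  exact (normalized_sum_sq_mul_pow_eq ht hn hnt).symm
end

section
/- The function f : ℝ \ {0} → ℝ given by f(t) = (e^{2t} − (t² + 2) e^t + 1)/(t² (e^t − 1)²) is integrable over ℝ and ∫_{-∞}^{∞} f(t) dt = 1. -/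
/-!
The integrand is the derivative of `F t = eᵗ / (eᵗ - 1) - 1 / t`, which extends continuously by
`F 0 = 1 / 2` and tends to `1` at `+∞`. It is nonnegative, its numerator being
`4 eᵗ (sinh² (t / 2) - (t / 2)²)`, and even, so its integral is `2 (1 - 1 / 2) = 1`.
-/

open MeasureTheory Real

open Set Filter Topology

section EvenFunction

variable {E : Type*} [NormedAddCommGroup E] {f : ℝ → E}

theorem Function.Even.integrable_of_integrableOn_Ioi (hf : Function.Even f)
    (h : IntegrableOn f (Ioi 0)) : Integrable f := by
  have hIio : IntegrableOn f (Iio 0) := by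
    have h' := (neg_zero (G := ℝ) ▸ h).comp_neg_Iio
    rwa [show (fun x => f (-x)) = f from funext hf] at h'
  rw [← integrableOn_univ, ← Iic_union_Ioi (a := (0 : ℝ))]
  exact ((integrableOn_Iic_iff_integrableOn_Iio (f := f)).mpr hIio).union h

theorem Function.Even.integral_eq_two_mul_integral_Ioi {f : ℝ → ℝ} (hf : Function.Even f) :
    ∫ x, f x = 2 * ∫ x in Ioi 0, f x := by
  rw [← integral_comp_abs]
  congr 1 with x
  rcases abs_choice x with h | h <;> rw [h]
  exact (hf x).symm

end EvenFunction

theorem sq_le_sinh_sq (x : ℝ) : x ^ 2 ≤ sinh x ^ 2 :=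
  sq_le_sq.mpr (by rw [abs_sinh]; exact self_le_sinh_iff.mpr (abs_nonneg x))

theorem exp_sub_one_ne_zero {t : ℝ} (ht : t ≠ 0) : exp t - 1 ≠ 0 :=
  sub_ne_zero.mpr (mt (exp_eq_one_iff t).mp ht)

theorem tendsto_exp_sub_one_div_nhdsNE : Tendsto (fun t => (exp t - 1) / t) (𝓝[≠] 0) (𝓝 1) := by
  simpa [div_eq_inv_mul] using hasDerivAt_iff_tendsto_slope_zero.mp (hasDerivAt_exp 0)

theorem tendsto_exp_sub_one_sub_div_sq_nhdsNE :
    Tendsto (fun t => (exp t - 1 - t) / t ^ 2) (𝓝[≠] 0) (𝓝 (1 / 2)) := by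
  refine HasDerivAt.lhopital_zero_nhdsNE (f' := fun t => exp t - 1) (g' := fun t => 2 * t)
    ?_ ?_ ?_ ?_ ?_ ?_
  · exact Eventually.of_forall fun t => ((hasDerivAt_exp t).sub_const 1).sub (hasDerivAt_id t)
  · exact Eventually.of_forall fun t => by simpa using hasDerivAt_pow 2 t
  · filter_upwards [self_mem_nhdsWithin] with t ht using mul_ne_zero two_ne_zero ht
  · apply tendsto_nhdsWithin_of_tendsto_nhds
    exact ((continuous_exp.sub continuous_const).sub continuous_id).tendsto' 0 0 (by simp)
  · apply tendsto_nhdsWithin_of_tendsto_nhds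
    simpa using (continuous_pow 2).tendsto (0 : ℝ)
  · simpa [div_mul_eq_div_div_swap] using tendsto_exp_sub_one_div_nhdsNE.div_const 2

noncomputable def limitDensity (t : ℝ) : ℝ :=
  (exp (2 * t) - (t ^ 2 + 2) * exp t + 1) / (t ^ 2 * (exp t - 1) ^ 2)

noncomputable def limitDensityPrimitive : ℝ → ℝ :=
  Function.update (fun t => exp t / (exp t - 1) - t⁻¹) 0 (1 / 2)

theorem tendsto_exp_div_exp_sub_one_sub_inv_nhdsNE :
    Tendsto (fun t => exp t / (exp t - 1) - t⁻¹) (𝓝[≠] 0) (𝓝 (1 / 2)) := by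
  -- `eᵗ / (eᵗ - 1) - 1 / t = 1 - ((eᵗ - 1 - t) / t²) / ((eᵗ - 1) / t)`
  have h := tendsto_const_nhds (x := (1 : ℝ)).sub
    (tendsto_exp_sub_one_sub_div_sq_nhdsNE.div tendsto_exp_sub_one_div_nhdsNE one_ne_zero)
  norm_num at h
  refine h.congr' ?_
  filter_upwards [self_mem_nhdsWithin] with t (ht : t ≠ 0)
  have := exp_sub_one_ne_zero ht
  field_simp
  ring

theorem continuousAt_limitDensityPrimitive_zero : ContinuousAt limitDensityPrimitive 0 :=
  continuousAt_update_same.mpr tendsto_exp_div_exp_sub_one_sub_inv_nhdsNE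

theorem hasDerivAt_limitDensityPrimitive {t : ℝ} (ht : t ≠ 0) :
    HasDerivAt limitDensityPrimitive (limitDensity t) t := by
  have hderiv := ((hasDerivAt_exp t).div ((hasDerivAt_exp t).sub_const 1)
    (exp_sub_one_ne_zero ht)).sub (hasDerivAt_inv ht)
  have hsimp : (exp t * (exp t - 1) - exp t * exp t) / (exp t - 1) ^ 2 - -(t ^ 2)⁻¹
      = limitDensity t := by
    have := exp_sub_one_ne_zero ht
    rw [limitDensity, two_mul, exp_add]
    field_simp
    ring
  rw [hsimp] at hderiv
  refine hderiv.congr_of_eventuallyEq ?_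
  filter_upwards [compl_singleton_mem_nhds ht] with x hx
  exact Function.update_of_ne hx _ _

theorem tendsto_limitDensityPrimitive_atTop : Tendsto limitDensityPrimitive atTop (𝓝 1) := by
  have h := (tendsto_const_nhds (x := (1 : ℝ)).add
    (tendsto_atTop_add_const_right atTop (-1) tendsto_exp_atTop).inv_tendsto_atTop).sub
    tendsto_inv_atTop_zero
  simp only [Pi.inv_apply, ← sub_eq_add_neg, add_zero, sub_zero] at h
  refine h.congr' ?_
  filter_upwards [eventually_gt_atTop 0] with t ht
  have := exp_sub_one_ne_zero ht.ne'
  rw [limitDensityPrimitive, Function.update_of_ne ht.ne']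
  field_simp
  ring

theorem limitDensity_nonneg (t : ℝ) : 0 ≤ limitDensity t := by
  have hnum : exp (2 * t) - (t ^ 2 + 2) * exp t + 1
      = 4 * exp t * (sinh (t / 2) ^ 2 - (t / 2) ^ 2) := by
    have h : exp t = exp (t / 2) ^ 2 := by rw [← exp_nat_mul]; ring_nf
    rw [two_mul, exp_add, sinh_eq, exp_neg, h]
    field_simp
    ring
  rw [limitDensity, hnum]
  have := sq_le_sinh_sq (t / 2)
  have := exp_pos t
  positivity

theorem limitDensity_even : Function.Even limitDensity := by
  intro t
  have h : exp (-t) * exp t = 1 := by rw [← exp_add, neg_add_cancel, exp_zero]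
  have hnum : exp (2 * -t) - ((-t) ^ 2 + 2) * exp (-t) + 1
      = exp (-t) ^ 2 * (exp (2 * t) - (t ^ 2 + 2) * exp t + 1) := by
    rw [two_mul, two_mul, exp_add, exp_add]
    linear_combination ((t ^ 2 + 2) * exp (-t) - exp (-t) * exp t - 1) * h
  have hden : (-t) ^ 2 * (exp (-t) - 1) ^ 2 = exp (-t) ^ 2 * (t ^ 2 * (exp t - 1) ^ 2) := by
    linear_combination t ^ 2 * (2 * exp (-t) - 1 - exp (-t) * exp t) * h
  rw [limitDensity, limitDensity, hnum, hden, mul_div_mul_left _ _ (by positivity)]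

/-- The pointwise limit of the first-intensity density in the fixed-`m` case:
`f(t) = (e^{2t} − (t² + 2)eᵗ + 1)/(t²(eᵗ − 1)²)` (for `t ≠ 0`)
is integrable over `ℝ` and has total integral `1`. -/
theorem limit_density_integral :
    Integrable (fun t : ℝ =>
        (Real.exp (2 * t) - (t ^ 2 + 2) * Real.exp t + 1) /
          (t ^ 2 * (Real.exp t - 1) ^ 2)) ∧
    (∫ t : ℝ, (Real.exp (2 * t) - (t ^ 2 + 2) * Real.exp t + 1) /
        (t ^ 2 * (Real.exp t - 1) ^ 2)) = 1 := by
  change Integrable limitDensity ∧ ∫ t, limitDensity t = 1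
  have hcont := continuousAt_limitDensityPrimitive_zero.continuousWithinAt (s := Ici 0)
  have hderiv : ∀ t ∈ Ioi (0 : ℝ), HasDerivAt limitDensityPrimitive (limitDensity t) t :=
    fun t ht => hasDerivAt_limitDensityPrimitive (ne_of_gt ht)
  have hnonneg : ∀ t ∈ Ioi (0 : ℝ), 0 ≤ limitDensity t := fun t _ => limitDensity_nonneg t
  have hIoi := integral_Ioi_of_hasDerivAt_of_nonneg hcont hderiv hnonneg
    tendsto_limitDensityPrimitive_atTop
  refine ⟨limitDensity_even.integrable_of_integrableOn_Ioi
    (integrableOn_Ioi_deriv_of_nonneg hcont hderiv hnonneg tendsto_limitDensityPrimitive_atTop), ?_⟩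
  rw [limitDensity_even.integral_eq_two_mul_integral_Ioi, hIoi, limitDensityPrimitive,
    Function.update_self]
  norm_num
end
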